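/- There is no finite subset F of A such that the family {D^a(f) : f ∈ F, a ≥ 0} spans the subspace span_ℂ{P_{n,m} : m ≥ n ≥ 0} of A. -/

import Mathlib

open MvPolynomial

noncomputable section

/-- The polynomial ring `A = ℂ[x₁, x₂, x₃, …]`, with variables indexed by
the positive integers (`X k` is the variable `x_k`). -/
abbrev A : Type := MvPolynomial ℕ+ ℂ

/-- The elementary Schur polynomials `S_k`, defined by the generating identity
`∑_{k≥0} S_k z^k = exp(∑_{n≥1} (x_n/(2n)) z^n)`; equivalently, `S_0 = 1` and
`(k+1) S_{k+1} = ∑_{j=0}^{k} (x_{k+1-j}/2) S_j` (obtained by differentiating in `z`). -/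
noncomputable def S : ℕ → A
  | 0 => 1
  | (k+1) =>
      ((k : ℂ) + 1)⁻¹ • ∑ j ∈ (Finset.range (k+1)).attach,
        (MvPolynomial.C (2⁻¹ : ℂ) * MvPolynomial.X ((k - j.1).succPNat)) * S j.1
  termination_by k => k
  decreasing_by
    have := j.2; simp only [Finset.mem_range] at this; omega

/-- The generalized binomial coefficient `C(1/2, k) = (1/2)(1/2−1)⋯(1/2−k+1)/k!`. -/
noncomputable def halfChoose (k : ℕ) : ℂ :=
  (∏ i ∈ Finset.range k, ((2⁻¹ : ℂ) - (i : ℂ))) / (k.factorial : ℂ)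

/-- `P_{n,m} = ∑_{k=0}^{n} (−1)^k C(1/2,k) S_{m+k} S_{n−k}`. -/
noncomputable def P (n m : ℕ) : A :=
  ∑ k ∈ Finset.range (n+1), ((-1 : ℂ)^k * halfChoose k) • (S (m+k) * S (n-k))

/-- The extremal vectors `φ_n = P_{n,n}`. -/
noncomputable def phi (n : ℕ) : A := P n n

/-- The translation operator `D(p) = x₁·p + ∑_{n≥1} n·x_{n+1}·∂p/∂x_n`
(the sum is finite on each polynomial: only the variables occurring in `p` contribute,
since `∂p/∂x_n = 0` for `n ∉ p.vars`). -/
noncomputable def D (p : A) : A :=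
  MvPolynomial.X 1 * p +
    ∑ n ∈ p.vars, ((n : ℕ) : ℂ) • (MvPolynomial.X (n + 1) * MvPolynomial.pderiv n p)

end

/-!
Give `x_n` the weight `n`. Then `S_k` and `P_{n,m}` are homogeneous of weights `k` and `n + m`,
and `D` raises the weight by one, so the weight-`W` part of the span of `{D^a f : f ∈ F}` is
spanned by the elements `D^{W-e} f_e`, where `f_e` runs over the weight-`e` components of the
`f ∈ F`: at most `|F| (d + 1)` elements, `d` being the largest weight occurring in `F`.

On the other side, the normalised derivations `∂_a = 2a ∂/∂x_a` act by `∂_a S_k = S_{k-a}`.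
Taking constant terms of `∂_W` and `∂_i ∂_{W-i}` (`1 ≤ i ≤ N`) on `P_{n,W-n}` for `W = 2N + 1`
and `n ≤ N` gives a unitriangular system, so these `N + 1` elements of weight `W` are linearly
independent. For `N = |F| (d + 1)` this contradicts the first count.
-/

open Finset

namespace MvPolynomial

variable {σ R : Type*} [CommSemiring R] {w : σ → ℕ}

lemma IsWeightedHomogeneous.pderiv_eq_zero_of_lt {p : MvPolynomial σ R} {d : ℕ} {i : σ}
    (hp : p.IsWeightedHomogeneous w d) (hd : d < w i) : pderiv i p = 0 := by
  refine pderiv_eq_zero_of_notMem_vars fun hi => ?_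
  obtain ⟨s, hs, his⟩ := (mem_vars_iff_mem_support i).mp hi
  have := Finsupp.le_weight_of_ne_zero' w (Finsupp.mem_support_iff.mp his)
  rw [hp (mem_support_iff.mp hs)] at this
  omega

def IsWeightedDegreeRaising (w : σ → ℕ) (L : MvPolynomial σ R →ₗ[R] MvPolynomial σ R) : Prop :=
  ∀ ⦃d p⦄, p.IsWeightedHomogeneous w d → (L p).IsWeightedHomogeneous w (d + 1)

namespace IsWeightedDegreeRaising

variable {L : MvPolynomial σ R →ₗ[R] MvPolynomial σ R}

lemma isWeightedHomogeneous_iterate (hL : IsWeightedDegreeRaising w L) {p : MvPolynomial σ R}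
    {d : ℕ} (hp : p.IsWeightedHomogeneous w d) (a : ℕ) :
    (L^[a] p).IsWeightedHomogeneous w (d + a) := by
  induction a with
  | zero => exact hp
  | succ a ih => rw [Function.iterate_succ_apply']; exact hL ih

lemma weightedHomogeneousComponent_iterate (hL : IsWeightedDegreeRaising w L) (a W : ℕ)
    (p : MvPolynomial σ R) :
    weightedHomogeneousComponent w W (L^[a] p) =
      if a ≤ W then L^[a] (weightedHomogeneousComponent w (W - a) p) else 0 := by
  have key : ∀ d q, q.IsWeightedHomogeneous w d → weightedHomogeneousComponent w W ((L ^ a) q) =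
      (if a ≤ W then (L ^ a) ∘ₗ weightedHomogeneousComponent w (W - a) else 0) q := by
    intro d q hq
    have hLq := Module.End.pow_apply L a q ▸ hL.isWeightedHomogeneous_iterate hq a
    by_cases hdW : d + a = W
    · subst hdW
      rw [if_pos (by omega), LinearMap.comp_apply, hLq.weightedHomogeneousComponent_same,
        Nat.add_sub_cancel, hq.weightedHomogeneousComponent_same]
    · rw [hLq.weightedHomogeneousComponent_ne W (Ne.symm hdW)]
      split_ifs
      · rw [LinearMap.comp_apply, hq.weightedHomogeneousComponent_ne _ (by omega), map_zero]
      · rfl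
  rw [← Module.End.pow_apply, p.as_sum, map_sum, map_sum,
    sum_congr rfl fun s _ => key _ _ (isWeightedHomogeneous_monomial w s _ rfl), ← map_sum]
  split_ifs <;> simp [Module.End.pow_apply]

lemma exists_card_le_map_weightedHomogeneousComponent_span_iterate
    (hL : IsWeightedDegreeRaising w L) (F : Finset (MvPolynomial σ R)) (W : ℕ) :
    ∃ G : Finset (MvPolynomial σ R), G.card ≤ F.card * (F.sup (weightedTotalDegree w) + 1) ∧
      (Submodule.span R {p | ∃ f ∈ F, ∃ a : ℕ, p = L^[a] f}).map
        (weightedHomogeneousComponent w W) ≤ Submodule.span R G := by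
  classical
  set degBound := F.sup (weightedTotalDegree w)
  refine ⟨(F ×ˢ range (degBound + 1)).image
    fun x => L^[W - x.2] (weightedHomogeneousComponent w x.2 x.1), ?_, ?_⟩
  · exact card_image_le.trans (by rw [card_product, card_range])
  rw [Submodule.map_span_le]
  rintro _ ⟨f, hf, a, rfl⟩
  rw [hL.weightedHomogeneousComponent_iterate]
  split_ifs with haW
  · by_cases hdeg : W - a ≤ weightedTotalDegree w f
    · refine Submodule.subset_span (mem_image.mpr ⟨(f, W - a), mem_product.mpr ⟨hf, ?_⟩, ?_⟩)
      · have : weightedTotalDegree w f ≤ degBound := le_sup hf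
        rw [mem_range]; omega
      · simp only [Nat.sub_sub_self haW]
    · rw [weightedHomogeneousComponent_eq_zero _ _ (by omega), iterate_map_zero]
      exact zero_mem _
  · exact zero_mem _

end IsWeightedDegreeRaising

end MvPolynomial

abbrev varWeight : ℕ+ → ℕ := (↑)

lemma D_eq_of_vars_subset (p : A) {s : Finset ℕ+} (hs : p.vars ⊆ s) :
    D p = X 1 * p + ∑ n ∈ s, ((n : ℕ) : ℂ) • (X (n + 1) * pderiv n p) := by
  rw [D, Finset.sum_subset hs fun n _ hn => by
    rw [pderiv_eq_zero_of_notMem_vars hn, mul_zero, smul_zero]]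

noncomputable def DLinear : A →ₗ[ℂ] A where
  toFun := D
  map_add' p q := by
    classical
    rw [D_eq_of_vars_subset (p + q) (vars_add_subset p q),
      D_eq_of_vars_subset p Finset.subset_union_left,
      D_eq_of_vars_subset q Finset.subset_union_right]
    simp only [map_add, mul_add, smul_add, Finset.sum_add_distrib]
    ring
  map_smul' c p := by
    have hvars : (c • p).vars ⊆ p.vars := by
      simpa [smul_eq_C_mul] using vars_mul (C c) p
    rw [D_eq_of_vars_subset (c • p) hvars, D]
    simp only [Derivation.map_smul, mul_smul_comm, smul_comm _ c, ← Finset.smul_sum, smul_add,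
      RingHom.id_apply]

lemma isWeightedDegreeRaising_DLinear : IsWeightedDegreeRaising varWeight DLinear := by
  intro d p hp
  refine (add_comm 1 d ▸ (isWeightedHomogeneous_X ℂ varWeight 1).mul hp).add
    (IsWeightedHomogeneous.sum _ _ _ fun n _ => ?_)
  rw [← mem_weightedHomogeneousSubmodule]
  refine Submodule.smul_mem _ _ ?_
  rw [mem_weightedHomogeneousSubmodule]
  by_cases hnd : (n : ℕ) ≤ d
  · have := (isWeightedHomogeneous_X ℂ varWeight (n + 1)).mul
      (hp.pderiv (n' := d - n) (Nat.sub_add_cancel hnd))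
    simp only [varWeight, PNat.add_coe, PNat.val_ofNat] at this
    rwa [show (n : ℕ) + 1 + (d - n) = d + 1 by omega] at this
  · rw [hp.pderiv_eq_zero_of_lt (by simpa using hnd), mul_zero]
    exact isWeightedHomogeneous_zero _ _ _

lemma S_zero : S 0 = 1 := by
  rw [S]

lemma S_succ (k : ℕ) :
    S (k + 1) = (2 * ((k : ℂ) + 1))⁻¹ • ∑ j ∈ Finset.range (k + 1), X (k - j).succPNat * S j := by
  rw [S, Finset.sum_attach (Finset.range (k + 1))
    fun j => C (2⁻¹ : ℂ) * X (k - j).succPNat * S j]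
  simp_rw [mul_assoc, ← smul_eq_C_mul, ← Finset.smul_sum, smul_smul, mul_inv, mul_comm]

lemma isWeightedHomogeneous_S (k : ℕ) : (S k).IsWeightedHomogeneous varWeight k := by
  induction k using Nat.strong_induction_on with
  | _ k ih =>
    cases k with
    | zero => rw [S_zero]; exact isWeightedHomogeneous_one ℂ varWeight
    | succ k =>
      rw [S_succ, ← mem_weightedHomogeneousSubmodule]
      refine Submodule.smul_mem _ _ (Submodule.sum_mem _ fun j hj => ?_)
      have hjk := Finset.mem_range.mp hj
      rw [mem_weightedHomogeneousSubmodule]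
      convert (isWeightedHomogeneous_X ℂ varWeight (k - j).succPNat).mul (ih j hjk) using 1
      simp only [varWeight, Nat.succPNat_coe]
      omega

lemma isWeightedHomogeneous_P (n m : ℕ) : (P n m).IsWeightedHomogeneous varWeight (n + m) := by
  rw [← mem_weightedHomogeneousSubmodule]
  refine Submodule.sum_mem _ fun k hk => Submodule.smul_mem _ _ ?_
  rw [mem_weightedHomogeneousSubmodule]
  convert (isWeightedHomogeneous_S (m + k)).mul (isWeightedHomogeneous_S (n - k)) using 1
  have := Finset.mem_range.mp hk
  omega

lemma constantCoeff_S (k : ℕ) : constantCoeff (S k) = if k = 0 then 1 else 0 := by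
  cases k with
  | zero => simp [S_zero]
  | succ k => simp [S_succ, constantCoeff_smul]

noncomputable def scaledPderiv (a : ℕ+) : Derivation ℂ A A := (2 * ((a : ℕ) : ℂ)) • pderiv a

lemma scaledPderiv_X (a b : ℕ+) :
    scaledPderiv a (X b) = if b = a then (2 * ((a : ℕ) : ℂ)) • 1 else 0 := by
  classical
  simp [scaledPderiv, pderiv_X, Pi.single_apply]

lemma sum_X_mul_S (k : ℕ) :
    ∑ j ∈ Finset.range (k + 1), X (k - j).succPNat * S j = (2 * ((k : ℂ) + 1)) • S (k + 1) := by
  rw [S_succ, smul_smul, mul_inv_cancel₀ (by norm_cast), one_smul]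

lemma sum_S_mul_scaledPderiv_X (a : ℕ+) (k : ℕ) :
    ∑ j ∈ Finset.range (k + 1), S j * scaledPderiv a (X (k - j).succPNat) =
      if (a : ℕ) ≤ k + 1 then (2 * ((a : ℕ) : ℂ)) • S (k + 1 - a) else 0 := by
  have hterm : ∀ j ∈ Finset.range (k + 1), S j * scaledPderiv a (X (k - j).succPNat) =
      if j = k + 1 - a then if (a : ℕ) ≤ k + 1 then (2 * ((a : ℕ) : ℂ)) • S j else 0 else 0 := by
    intro j hj
    have hj := Finset.mem_range.mp hj
    rw [scaledPderiv_X, mul_ite, mul_smul_comm, mul_one, mul_zero]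
    simp only [← PNat.coe_inj, Nat.succPNat_coe]
    split_ifs <;> first | rfl | omega
  rw [Finset.sum_congr rfl hterm, Finset.sum_ite_eq']
  split_ifs <;> first | rfl | simp_all

lemma sum_X_mul_ite_S (a : ℕ+) (k : ℕ) :
    ∑ j ∈ Finset.range (k + 1), X (k - j).succPNat * (if (a : ℕ) ≤ j then S (j - a) else 0) =
      if (a : ℕ) ≤ k then (2 * ((k - a : ℕ) + 1 : ℂ)) • S (k + 1 - a) else 0 := by
  split_ifs with hak
  · obtain ⟨t, rfl⟩ := Nat.exists_eq_add_of_le hak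
    rw [add_assoc, Finset.sum_range_add, Finset.sum_eq_zero fun j hj => by
      rw [if_neg (by simpa using hj), mul_zero], zero_add]
    simp only [le_add_iff_nonneg_right, zero_le, if_true, Nat.add_sub_cancel_left,
      Nat.add_sub_add_left]
    rw [sum_X_mul_S]
  · exact Finset.sum_eq_zero fun j hj => by
      rw [if_neg (by simp at hj; omega), mul_zero]

lemma scaledPderiv_S (a : ℕ+) (k : ℕ) :
    scaledPderiv a (S k) = if (a : ℕ) ≤ k then S (k - a) else 0 := by
  induction k using Nat.strong_induction_on with
  | _ k ih =>
    cases k with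
    | zero => simp [S_zero]
    | succ k =>
      have hsum : scaledPderiv a (∑ j ∈ Finset.range (k + 1), X (k - j).succPNat * S j) =
          (if (a : ℕ) ≤ k + 1 then (2 * ((a : ℕ) : ℂ)) • S (k + 1 - a) else 0) +
            if (a : ℕ) ≤ k then (2 * ((k - a : ℕ) + 1 : ℂ)) • S (k + 1 - a) else 0 := by
        simp only [map_sum, Derivation.leibniz, smul_eq_mul, Finset.sum_add_distrib]
        rw [← sum_S_mul_scaledPderiv_X, ← sum_X_mul_ite_S, add_comm]
        congr 1
        refine Finset.sum_congr rfl fun j hj => ?_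
        rw [ih j (by simpa using hj)]
      rw [S_succ, Derivation.map_smul, hsum]
      have ha := a.pos
      split_ifs with h1 h2 h2
      · rw [← add_smul, smul_smul]
        convert one_smul ℂ _
        field_simp
        push_cast [h2]
        ring
      · have hak : (a : ℕ) = k + 1 := by omega
        rw [add_zero, smul_smul, hak]
        convert one_smul ℂ _
        field_simp
        push_cast
        ring
      · omega
      · simp

lemma constantCoeff_scaledPderiv_S (a : ℕ+) (k : ℕ) :
    constantCoeff (scaledPderiv a (S k)) = if (a : ℕ) = k then 1 else 0 := by
  rw [scaledPderiv_S]
  split_ifs <;> simp [constantCoeff_S] <;> omega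

lemma constantCoeff_scaledPderiv_scaledPderiv_S (i j : ℕ+) (k : ℕ) :
    constantCoeff (scaledPderiv i (scaledPderiv j (S k))) =
      if (i : ℕ) + j = k then 1 else 0 := by
  rw [scaledPderiv_S]
  split_ifs <;> simp [constantCoeff_scaledPderiv_S] <;> omega

lemma constantCoeff_scaledPderiv_P {n m : ℕ} (hm : 0 < m) {a : ℕ+} (ha : (a : ℕ) = n + m) :
    constantCoeff (scaledPderiv a (P n m)) = (-1) ^ n * halfChoose n := by
  simp only [P, map_sum, Derivation.map_smul, constantCoeff_smul, Derivation.leibniz, smul_eq_mul,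
    map_add, map_mul, constantCoeff_S, constantCoeff_scaledPderiv_S]
  rw [Finset.sum_eq_single n]
  · simp [ha, add_comm m n, Nat.pos_iff_ne_zero.mp hm]
  · intro k hk hkn
    have := Finset.mem_range.mp hk
    rw [if_neg (show m + k ≠ 0 by omega), if_neg (show n - k ≠ 0 by omega)]
    simp
  · simp

lemma constantCoeff_scaledPderiv_scaledPderiv_P {n m : ℕ} {i j : ℕ+} (hi : (i : ℕ) < m)
    (hij : (i : ℕ) + j = n + m) :
    constantCoeff (scaledPderiv i (scaledPderiv j (P n m))) =
      (-1) ^ n * halfChoose n + if (i : ℕ) ≤ n then (-1) ^ (n - i) * halfChoose (n - i) else 0 := by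
  simp only [P, map_sum, Derivation.map_smul, constantCoeff_smul, Derivation.leibniz, smul_eq_mul,
    map_add, map_mul, constantCoeff_S, constantCoeff_scaledPderiv_S,
    constantCoeff_scaledPderiv_scaledPderiv_S]
  rw [Finset.sum_congr rfl fun k hk => show _ = (if k = n then (-1) ^ k * halfChoose k else 0) +
      if k = n - i then (if (i : ℕ) ≤ n then (-1) ^ k * halfChoose k else 0) else 0 by
    have := Finset.mem_range.mp hk
    have := j.pos
    rw [if_neg (by omega : m + k ≠ 0), if_neg (by omega : (i : ℕ) ≠ m + k)]
    split_ifs <;> first | omega | ring]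
  rw [Finset.sum_add_distrib, Finset.sum_ite_eq', Finset.sum_ite_eq']
  simp

lemma eq_zero_of_forall_sum_mul_ite_le_eq_zero {R : Type*} [Semiring R] [NoZeroDivisors R]
    {N : ℕ} {c : ℕ → R} (hc : c 0 ≠ 0) {g : Fin N → R}
    (h : ∀ i, ∑ n, g n * (if i ≤ n then c (n - i) else 0) = 0) (n : Fin N) : g n = 0 := by
  induction hk : N - (n : ℕ) using Nat.strong_induction_on generalizing n with
  | _ k ih =>
    have hn := h n
    rw [Finset.sum_eq_single n] at hn
    · simpa [hc] using hn
    · intro b _ hbn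
      by_cases hnb : n ≤ b
      · rw [ih (N - b) (by omega) b rfl, zero_mul]
      · rw [if_neg hnb, mul_zero]
    · simp

lemma linearIndependent_P (N : ℕ) :
    LinearIndependent ℂ fun n : Fin (N + 1) => P n (2 * N + 1 - n) := by
  rw [Fintype.linearIndependent_iff]
  intro g hg
  have hfirstOrder : ∑ n, g n * ((-1) ^ (n : ℕ) * halfChoose n) = 0 := by
    have := congrArg (fun p => constantCoeff (scaledPderiv (2 * N).succPNat p)) hg
    simp only [map_sum, Derivation.map_smul, constantCoeff_smul, smul_eq_mul, map_zero] at this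
    convert this using 3 with n
    rw [constantCoeff_scaledPderiv_P (by omega) (by simp; omega)]
  have hsecondOrder : ∀ i : ℕ+, (i : ℕ) ≤ N →
      ∑ n : Fin (N + 1), g n * ((-1) ^ (n : ℕ) * halfChoose n +
        if (i : ℕ) ≤ n then (-1) ^ (n - i : ℕ) * halfChoose (n - i) else 0) = 0 := by
    intro i hi
    have := congrArg (fun p =>
      constantCoeff (scaledPderiv i (scaledPderiv (2 * N - i).succPNat p))) hg
    simp only [map_sum, Derivation.map_smul, constantCoeff_smul, smul_eq_mul, map_zero] at this
    convert this using 3 with n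
    rw [constantCoeff_scaledPderiv_scaledPderiv_P (by omega) (by simp; omega)]
  -- Row `i` of the unitriangular system is `hfirstOrder` for `i = 0`, and the difference of
  -- `hsecondOrder i` and `hfirstOrder` for `i ≥ 1`.
  refine eq_zero_of_forall_sum_mul_ite_le_eq_zero (c := fun k => (-1) ^ k * halfChoose k)
    (by simp [halfChoose]) fun i => ?_
  obtain ⟨_ | i, hiN⟩ := i
  · simpa [Fin.le_iff_val_le_val] using hfirstOrder
  · have := hsecondOrder i.succPNat (by simp; omega)
    simpa [mul_add, Finset.sum_add_distrib, hfirstOrder, Fin.le_iff_val_le_val] using this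

/-- There is no finite subset `F` of `A` such that the family `{D^a(f) : f ∈ F, a ≥ 0}`
spans the subspace `span_ℂ{P_{n,m} : m ≥ n ≥ 0}` of `A`. -/
theorem no_finite_D_generating_set :
    ¬ ∃ F : Finset A,
        Submodule.span ℂ {p : A | ∃ f ∈ F, ∃ a : ℕ, p = D^[a] f} =
          Submodule.span ℂ {p : A | ∃ n m : ℕ, n ≤ m ∧ p = P n m} := by
  rintro ⟨F, hF⟩
  set N := F.card * (F.sup (weightedTotalDegree varWeight) + 1)
  obtain ⟨G, hGcard, hG⟩ :=
    isWeightedDegreeRaising_DLinear.exists_card_le_map_weightedHomogeneousComponent_span_iterate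
      F (2 * N + 1)
  have hPG : ∀ n : Fin (N + 1), P n (2 * N + 1 - n) ∈ Submodule.span ℂ (G : Set A) := by
    intro n
    have hPF : P n (2 * N + 1 - n) ∈ Submodule.span ℂ {p | ∃ f ∈ F, ∃ a : ℕ, p = D^[a] f} :=
      hF ▸ Submodule.subset_span ⟨n, _, by omega, rfl⟩
    have hhom := isWeightedHomogeneous_P n (2 * N + 1 - n)
    rw [Nat.add_sub_cancel' (by omega)] at hhom
    simpa only [hhom.weightedHomogeneousComponent_same] using hG (Submodule.mem_map_of_mem hPF)
  have := linearIndependent_le_span' _ (linearIndependent_P N) G (Set.range_subset_iff.mpr hPG)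
  simp only [Cardinal.mk_fintype, Fintype.card_fin, Finset.coe_sort_coe, Fintype.card_coe] at this
  norm_cast at this
  omega
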